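/- arXiv:1402.5172 — 2 statements merged into one kernel-verified Lean document; each statement's English description precedes it below -/
import Mathlib

section
/- Idempotent law for guarded composition of full Kraus families: if all n guarded families are the same full family {E_δ : δ∈Δ} on H (∑_δ E_δ†E_δ = I_H), and ρ is any density operator on H_C, then for every density operator σ on H: tr_{H_C}( ∑_{(δ_1,...,δ_n)} F(δ_1,...,δ_n)(σ⊗ρ)F(δ_1,...,δ_n)† ) = ∑_{δ∈Δ} E_δ σ E_δ†. -/
noncomputable section
open scoped InnerProductSpace
open Finset

/-- Coordinate model of the tensor product `H_C ⊗ H` along a fixed orthonormal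
basis of the `n`-dimensional coin space `H_C`. -/
abbrev TensorSp (n : ℕ) (H : Type*) [NormedAddCommGroup H] [InnerProductSpace ℂ H] : Type _ :=
  PiLp 2 (fun _ : Fin n => H)

variable {n : ℕ} {H : Type*} [NormedAddCommGroup H] [InnerProductSpace ℂ H]

/-- the pure tensor `c ⊗ ψ`. -/
def pureTensor (c : EuclideanSpace ℂ (Fin n)) (ψ : H) : TensorSp n H :=
  WithLp.toLp 2 (fun i => c i • ψ)

/-- the block-diagonal operator `∑ᵢ |i⟩⟨i| ⊗ Uᵢ`, i.e. the guarded composition of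
the `Uᵢ` along the computational basis of the coin space. -/
def blockDiag (U : Fin n → (H →ₗ[ℂ] H)) : TensorSp n H →ₗ[ℂ] TensorSp n H where
  toFun x := WithLp.toLp 2 (fun i => U i (x i))
  map_add' x y := by ext i; simp [map_add]
  map_smul' c x := by ext i; simp [map_smul]

/-- `A ⊗ B` in the coordinate model, `A` acting on the coin space. -/
def tensorOp (A : EuclideanSpace ℂ (Fin n) →ₗ[ℂ] EuclideanSpace ℂ (Fin n))
    (B : H →ₗ[ℂ] H) : TensorSp n H →ₗ[ℂ] TensorSp n H where
  toFun x := WithLp.toLp 2 (fun i => ∑ b : Fin n, A (EuclideanSpace.single b 1) i • B (x b))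
  map_add' x y := by
    ext i; simp [map_add, smul_add, Finset.sum_add_distrib]
  map_smul' c x := by
    ext i; simp [map_smul, Finset.smul_sum, smul_comm c]

/-- `A ⊗ I_H`. -/
def tensorLeft (A : EuclideanSpace ℂ (Fin n) →ₗ[ℂ] EuclideanSpace ℂ (Fin n)) :
    TensorSp n H →ₗ[ℂ] TensorSp n H :=
  tensorOp A LinearMap.id

/-- A linear operator is unitary iff it preserves inner products and is bijective. -/
def IsUnitaryOp {E : Type*} [NormedAddCommGroup E] [InnerProductSpace ℂ E]
    (A : E →ₗ[ℂ] E) : Prop :=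
  (∀ x y : E, ⟪A x, A y⟫_ℂ = ⟪x, y⟫_ℂ) ∧ Function.Bijective A

/-- Positive (semidefinite) operator. -/
def IsPosOp {E : Type*} [NormedAddCommGroup E] [InnerProductSpace ℂ E]
    (A : E →ₗ[ℂ] E) : Prop :=
  ∀ x : E, (⟪x, A x⟫_ℂ).im = 0 ∧ 0 ≤ (⟪x, A x⟫_ℂ).re

/-- Löwner order `A ⊑ B`. -/
def Loewner {E : Type*} [NormedAddCommGroup E] [InnerProductSpace ℂ E]
    (A B : E →ₗ[ℂ] E) : Prop :=
  IsPosOp (B - A)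

section guarded
variable [FiniteDimensional ℂ H] {Δ : Fin n → Type*} [∀ k, Fintype (Δ k)]

/-- the coefficients `λ_{kδ}`. -/
def lam (F : ∀ k, Δ k → (H →ₗ[ℂ] H)) (k : Fin n) (δ : Δ k) : ℝ :=
  Real.sqrt ((LinearMap.trace ℂ H (LinearMap.adjoint (F k δ) ∘ₗ F k δ)).re /
    ∑ τ : Δ k, (LinearMap.trace ℂ H (LinearMap.adjoint (F k τ) ∘ₗ F k τ)).re)

/-- the guarded composition `□ᵢ |i⟩ → Fᵢ` of operator-valued functions, evaluated at
`⊕ᵢ δᵢ`. -/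
def guardedComp (F : ∀ k, Δ k → (H →ₗ[ℂ] H)) (δ : ∀ k, Δ k) :
    TensorSp n H →ₗ[ℂ] TensorSp n H where
  toFun x := WithLp.toLp 2 (fun i => (∏ k ∈ Finset.univ.erase i, lam F k (δ k)) • F i (δ i) (x i))
  map_add' x y := by ext i; simp [map_add, smul_add]
  map_smul' c x := by
    ext i; simp [map_smul, smul_comm c]

end guarded

/-- partial trace over the coin space of an operator on `H_C ⊗ H`. -/
def coinProj (i : Fin n) : TensorSp n H →ₗ[ℂ] H where
  toFun x := x i
  map_add' _ _ := rfl
  map_smul' _ _ := rfl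

def coinIncl (i : Fin n) : H →ₗ[ℂ] TensorSp n H where
  toFun ψ := WithLp.toLp 2 (Pi.single i ψ)
  map_add' x y := by ext j; by_cases h : j = i <;> simp [h]
  map_smul' c x := by ext j; by_cases h : j = i <;> simp [h]

def trCoin (A : TensorSp n H →ₗ[ℂ] TensorSp n H) : H →ₗ[ℂ] H :=
  ∑ i : Fin n, coinProj i ∘ₗ A ∘ₗ coinIncl i

/-- the outer product `|x⟩⟨y|`. -/
def outer {E : Type*} [NormedAddCommGroup E] [InnerProductSpace ℂ E]
    (x y : E) : E →ₗ[ℂ] E :=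
  ((innerSL ℂ y).toLinearMap).smulRight x


/-! The guarded composition is block diagonal along the coin basis, so the partial trace only
sees diagonal blocks, and the `i`-th block of `G_δ (ρ ⊗ σ) G_δ†` is
`ρᵢᵢ ∏_{k ≠ i} λ_{δ_k}² • E_{δᵢ} σ E_{δᵢ}†`. For a full family `∑_τ tr (E_τ† E_τ) = dim H`,
so the `λ_τ²` sum to `1`; summing out the `δ_k` with `k ≠ i` therefore leaves
`∑_δ E_δ σ E_δ†`, and the remaining sum over `i` contributes the factor `tr ρ = 1`. -/

section weights

variable {R M ι : Type*} [CommSemiring R] [AddCommMonoid M] [Module R M]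
  [Fintype ι] [DecidableEq ι] {κ : ι → Type*} [∀ k, Fintype (κ k)]

theorem sum_pi_prod_erase_mul_ite [∀ k, DecidableEq (κ k)] (w : ∀ k, κ k → R)
    (hw : ∀ k, ∑ τ, w k τ = 1) (i : ι) (d : κ i) :
    ∑ δ : ∀ k, κ k, (∏ k ∈ univ.erase i, w k (δ k)) * (if δ i = d then 1 else 0) = 1 := by
  -- Expand `∏ k, ∑ τ, g k τ`, where `g` puts the indicator of `d` in the `i`-th factor.
  let g : ∀ k, κ k → R := fun k τ => if h : k = i then (if h ▸ τ = d then 1 else 0) else w k τ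
  have hg : ∀ δ : ∀ k, κ k,
      ∏ k, g k (δ k) = (∏ k ∈ univ.erase i, w k (δ k)) * (if δ i = d then 1 else 0) := by
    intro δ
    rw [← Finset.mul_prod_erase univ _ (mem_univ i), mul_comm]
    congr 1
    · exact Finset.prod_congr rfl fun k hk => dif_neg (ne_of_mem_erase hk)
    · simp [g]
  simp_rw [← hg, ← Fintype.prod_sum]
  refine Finset.prod_eq_one fun k _ => ?_
  by_cases hk : k = i
  · subst hk; simp [g]
  · simp [g, hk, hw]

theorem sum_pi_prod_erase_smul (w : ∀ k, κ k → R) (hw : ∀ k, ∑ τ, w k τ = 1)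
    (i : ι) (A : κ i → M) :
    ∑ δ : ∀ k, κ k, (∏ k ∈ univ.erase i, w k (δ k)) • A (δ i) = ∑ d, A d := by
  classical
  calc ∑ δ : ∀ k, κ k, (∏ k ∈ univ.erase i, w k (δ k)) • A (δ i)
      = ∑ δ : ∀ k, κ k, ∑ d,
          ((∏ k ∈ univ.erase i, w k (δ k)) * if δ i = d then 1 else 0) • A d := by
        refine Finset.sum_congr rfl fun δ _ => ?_
        simp [mul_ite]
    _ = ∑ d, A d := by
        rw [Finset.sum_comm]
        simp_rw [← Finset.sum_smul, sum_pi_prod_erase_mul_ite w hw, one_smul]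

end weights

theorem LinearMap.trace_euclideanSpace_eq_sum {𝕜 ι : Type*} [RCLike 𝕜] [Fintype ι]
    [DecidableEq ι] (A : EuclideanSpace 𝕜 ι →ₗ[𝕜] EuclideanSpace 𝕜 ι) :
    LinearMap.trace 𝕜 _ A = ∑ i, A (EuclideanSpace.single i 1) i := by
  simp [A.trace_eq_sum_inner (EuclideanSpace.basisFun ι 𝕜), EuclideanSpace.inner_single_left]

section lam

variable {n : ℕ} {H : Type*} [NormedAddCommGroup H] [InnerProductSpace ℂ H]
  [FiniteDimensional ℂ H] {Δ : Fin n → Type*} [∀ k, Fintype (Δ k)]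

theorem re_trace_adjoint_comp_self_nonneg (A : H →ₗ[ℂ] H) :
    0 ≤ (LinearMap.trace ℂ H (LinearMap.adjoint A ∘ₗ A)).re :=
  Complex.nonneg_iff.1 (A.isPositive_adjoint_comp_self.trace_nonneg) |>.1

theorem sum_re_trace_adjoint_comp_self {ι : Type*} [Fintype ι] (E : ι → H →ₗ[ℂ] H)
    (hE : ∑ τ, LinearMap.adjoint (E τ) ∘ₗ E τ = LinearMap.id) :
    ∑ τ, (LinearMap.trace ℂ H (LinearMap.adjoint (E τ) ∘ₗ E τ)).re = Module.finrank ℂ H := by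
  rw [← Complex.re_sum, ← map_sum, hE, LinearMap.trace_id, Complex.natCast_re]

theorem lam_mul_self (F : ∀ k, Δ k → (H →ₗ[ℂ] H)) (k : Fin n) (δ : Δ k) :
    lam F k δ * lam F k δ = (LinearMap.trace ℂ H (LinearMap.adjoint (F k δ) ∘ₗ F k δ)).re /
      ∑ τ : Δ k, (LinearMap.trace ℂ H (LinearMap.adjoint (F k τ) ∘ₗ F k τ)).re :=
  Real.mul_self_sqrt <| div_nonneg (re_trace_adjoint_comp_self_nonneg _) <|
    Finset.sum_nonneg fun _ _ => re_trace_adjoint_comp_self_nonneg _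

theorem sum_lam_mul_self [Nontrivial H] (F : ∀ k, Δ k → (H →ₗ[ℂ] H)) (k : Fin n)
    (hF : ∑ τ, LinearMap.adjoint (F k τ) ∘ₗ F k τ = LinearMap.id) :
    ∑ τ, lam F k τ * lam F k τ = 1 := by
  simp_rw [lam_mul_self, ← Finset.sum_div, sum_re_trace_adjoint_comp_self _ hF]
  exact div_self (Nat.cast_ne_zero.2 Module.finrank_pos.ne')

end lam

section coin

variable {n : ℕ} {H : Type*} [NormedAddCommGroup H] [InnerProductSpace ℂ H]

theorem inner_coinIncl_left (i : Fin n) (ψ : H) (x : TensorSp n H) :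
    ⟪coinIncl i ψ, x⟫_ℂ = ⟪ψ, x i⟫_ℂ := by
  simp only [coinIncl, LinearMap.coe_mk, AddHom.coe_mk, PiLp.inner_apply]
  rw [Fintype.sum_eq_single i fun j hj => by simp [hj]]
  simp

theorem coinProj_comp_tensorOp_comp_coinIncl
    (A : EuclideanSpace ℂ (Fin n) →ₗ[ℂ] EuclideanSpace ℂ (Fin n)) (B : H →ₗ[ℂ] H) (i j : Fin n) :
    coinProj i ∘ₗ tensorOp A B ∘ₗ coinIncl j = A (EuclideanSpace.single j 1) i • B := by
  ext ψ
  change ∑ b, A (EuclideanSpace.single b 1) i • B ((Pi.single j ψ : Fin n → H) b) = _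
  rw [Fintype.sum_eq_single j fun b hb => by simp [hb]]
  simp

theorem trCoin_sum {ι : Type*} (s : Finset ι) (X : ι → TensorSp n H →ₗ[ℂ] TensorSp n H) :
    trCoin (∑ δ ∈ s, X δ) = ∑ δ ∈ s, trCoin (X δ) := by
  ext ψ
  simp only [trCoin, LinearMap.sum_apply, LinearMap.coe_comp, LinearMap.coe_sum,
    Function.comp_apply, Finset.sum_apply, map_sum]
  exact Finset.sum_comm

variable [FiniteDimensional ℂ H]

theorem adjoint_coinProj (i : Fin n) : LinearMap.adjoint (coinProj (H := H) i) = coinIncl i :=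
  ((LinearMap.eq_adjoint_iff _ _).2 fun ψ x => inner_coinIncl_left i ψ x).symm

variable {Δ : Fin n → Type*} [∀ k, Fintype (Δ k)]

theorem coinProj_comp_guardedComp (F : ∀ k, Δ k → (H →ₗ[ℂ] H)) (δ : ∀ k, Δ k) (i : Fin n) :
    coinProj i ∘ₗ guardedComp F δ =
      ((∏ k ∈ univ.erase i, lam F k (δ k) : ℝ) : ℂ) • (F i (δ i) ∘ₗ coinProj i) := by
  ext x
  exact (Complex.coe_smul _ _).symm

theorem adjoint_guardedComp_comp_coinIncl (F : ∀ k, Δ k → (H →ₗ[ℂ] H)) (δ : ∀ k, Δ k)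
    (i : Fin n) :
    LinearMap.adjoint (guardedComp F δ) ∘ₗ coinIncl i =
      ((∏ k ∈ univ.erase i, lam F k (δ k) : ℝ) : ℂ) •
        (coinIncl i ∘ₗ LinearMap.adjoint (F i (δ i))) := by
  have h := congrArg LinearMap.adjoint (coinProj_comp_guardedComp F δ i)
  rwa [LinearMap.adjoint_comp, adjoint_coinProj, map_smulₛₗ, LinearMap.adjoint_comp,
    adjoint_coinProj, Complex.conj_ofReal] at h

theorem coinProj_comp_guardedComp_conj_comp_coinIncl (F : ∀ k, Δ k → (H →ₗ[ℂ] H))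
    (δ : ∀ k, Δ k) (A : EuclideanSpace ℂ (Fin n) →ₗ[ℂ] EuclideanSpace ℂ (Fin n))
    (B : H →ₗ[ℂ] H) (i : Fin n) :
    coinProj i ∘ₗ (guardedComp F δ ∘ₗ tensorOp A B ∘ₗ LinearMap.adjoint (guardedComp F δ)) ∘ₗ
        coinIncl i =
      (∏ k ∈ univ.erase i, ((lam F k (δ k) * lam F k (δ k) : ℝ) : ℂ)) •
        A (EuclideanSpace.single i 1) i • (F i (δ i) ∘ₗ B ∘ₗ LinearMap.adjoint (F i (δ i))) := by
  set c : ℂ := ((∏ k ∈ univ.erase i, lam F k (δ k) : ℝ) : ℂ)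
  calc _ = (coinProj i ∘ₗ guardedComp F δ) ∘ₗ tensorOp A B ∘ₗ
          (LinearMap.adjoint (guardedComp F δ) ∘ₗ coinIncl i) := by
        simp only [LinearMap.comp_assoc]
    _ = (c * c) • (F i (δ i) ∘ₗ (coinProj i ∘ₗ tensorOp A B ∘ₗ coinIncl i) ∘ₗ
          LinearMap.adjoint (F i (δ i))) := by
        rw [coinProj_comp_guardedComp, adjoint_guardedComp_comp_coinIncl]
        simp only [LinearMap.smul_comp, LinearMap.comp_smul, smul_smul, LinearMap.comp_assoc]
        rfl
    _ = _ := by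
        rw [coinProj_comp_tensorOp_comp_coinIncl, LinearMap.smul_comp, LinearMap.comp_smul,
          smul_smul]
        push_cast [c, Finset.prod_mul_distrib]
        rw [smul_smul]

end coin

theorem guardedComp_idempotent_general {n : ℕ} {H : Type*}
    [NormedAddCommGroup H] [InnerProductSpace ℂ H] [FiniteDimensional ℂ H]
    {Δ₀ : Type*} [Fintype Δ₀] (E₀ : Δ₀ → (H →ₗ[ℂ] H))
    (hfull : ∑ δ : Δ₀, LinearMap.adjoint (E₀ δ) ∘ₗ E₀ δ = LinearMap.id)
    (ρ : EuclideanSpace ℂ (Fin n) →ₗ[ℂ] EuclideanSpace ℂ (Fin n))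
    (hρtr : LinearMap.trace ℂ _ ρ = 1)
    (σ : H →ₗ[ℂ] H) :
    trCoin (∑ δ : (∀ _ : Fin n, Δ₀),
        guardedComp (fun _ d => E₀ d) δ ∘ₗ tensorOp ρ σ ∘ₗ
          LinearMap.adjoint (guardedComp (fun _ d => E₀ d) δ))
      = ∑ δ : Δ₀, E₀ δ ∘ₗ σ ∘ₗ LinearMap.adjoint (E₀ δ) := by
  rcases subsingleton_or_nontrivial H with hH | hH
  · exact Subsingleton.elim _ _
  set F : Fin n → Δ₀ → H →ₗ[ℂ] H := fun _ d => E₀ d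
  have hw (k : Fin n) : ∑ τ, ((lam F k τ * lam F k τ : ℝ) : ℂ) = 1 := by
    rw [← Complex.ofReal_sum, sum_lam_mul_self F k hfull, Complex.ofReal_one]
  calc _ = ∑ i, ∑ δ : Fin n → Δ₀, coinProj i ∘ₗ
          (guardedComp F δ ∘ₗ tensorOp ρ σ ∘ₗ LinearMap.adjoint (guardedComp F δ)) ∘ₗ
            coinIncl i := by
        rw [trCoin_sum, Finset.sum_comm]
        rfl
    _ = ∑ i, ρ (EuclideanSpace.single i 1) i • ∑ d, E₀ d ∘ₗ σ ∘ₗ LinearMap.adjoint (E₀ d) := by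
        refine Finset.sum_congr rfl fun i _ => ?_
        simp only [coinProj_comp_guardedComp_conj_comp_coinIncl, Finset.smul_sum]
        exact sum_pi_prod_erase_smul _ hw i
          fun d => ρ (EuclideanSpace.single i 1) i • (E₀ d ∘ₗ σ ∘ₗ LinearMap.adjoint (E₀ d))
    _ = _ := by rw [← Finset.sum_smul, ← LinearMap.trace_euclideanSpace_eq_sum, hρtr, one_smul]

/-- idempotent law — if all `n` guarded families are the same full
family `{E_δ}` then, after tracing out the coin (initialized in any density
operator `ρ`), the guarded composition acts on `σ` as `∑_δ E_δ σ E_δ†`. -/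
theorem guardedComp_idempotent {n : ℕ} {H : Type*}
    [NormedAddCommGroup H] [InnerProductSpace ℂ H] [FiniteDimensional ℂ H]
    {Δ₀ : Type*} [Fintype Δ₀] (E₀ : Δ₀ → (H →ₗ[ℂ] H))
    (hfull : ∑ δ : Δ₀, LinearMap.adjoint (E₀ δ) ∘ₗ E₀ δ = LinearMap.id)
    (ρ : EuclideanSpace ℂ (Fin n) →ₗ[ℂ] EuclideanSpace ℂ (Fin n))
    (hρ : IsPosOp ρ) (hρtr : LinearMap.trace ℂ _ ρ = 1)
    (σ : H →ₗ[ℂ] H) (hσ : IsPosOp σ) (hσtr : LinearMap.trace ℂ H σ = 1) :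
    trCoin (∑ δ : (∀ _ : Fin n, Δ₀),
        guardedComp (fun _ d => E₀ d) δ ∘ₗ tensorOp ρ σ ∘ₗ
          LinearMap.adjoint (guardedComp (fun _ d => E₀ d) δ))
      = ∑ δ : Δ₀, E₀ δ ∘ₗ σ ∘ₗ LinearMap.adjoint (E₀ δ) :=
  guardedComp_idempotent_general E₀ hfull ρ hρtr σ
end
end

section
/- Coin-rotation law for guarded composition of unitaries: for unitaries U on H_C and U_1,...,U_n on H, (guarded composition of U_i along the basis {U†|i⟩}) followed by U ⊗ I_H equals U ⊗ I_H followed by (guarded composition of U_i along {|i⟩}); i.e., (U ⊗ I_H)·Q' = Q·(U ⊗ I_H) where Q' is the guarded composition along {U†|i⟩} and Q along {|i⟩}. -/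
noncomputable section
open scoped InnerProductSpace
open Finset

variable {n : ℕ} {H : Type*} [NormedAddCommGroup H] [InnerProductSpace ℂ H]

/-!
Both sides are linear, so it suffices to compare them on the pure tensors `U†|i⟩ ⊗ ψ`,
which span `H_C ⊗ H` because `{U†|i⟩}` is a basis. On such a tensor both sides give
`|i⟩ ⊗ Uᵢ ψ`: on the left `Q'` acts by `Uᵢ` and then `U` sends `U†|i⟩` to `|i⟩`, on the
right `U` does so first and the block-diagonal operator then acts by `Uᵢ` on the `i`-th block.
-/

lemma sum_pureTensor_single (x : TensorSp n H) :
    ∑ j, pureTensor (EuclideanSpace.single j 1) (x j) = x := by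
  ext i
  simp [pureTensor]

def pureTensorBilin : EuclideanSpace ℂ (Fin n) →ₗ[ℂ] H →ₗ[ℂ] TensorSp n H :=
  LinearMap.mk₂ ℂ pureTensor
    (fun c d ψ => by ext i; simp [pureTensor, add_smul])
    (fun a c ψ => by ext i; simp [pureTensor, mul_smul])
    (fun c ψ φ => by ext i; simp [pureTensor, smul_add])
    (fun a c ψ => by ext i; simp [pureTensor, smul_comm a])

lemma ext_pureTensor {M : Type*} [AddCommGroup M] [Module ℂ M] {f g : TensorSp n H →ₗ[ℂ] M}
    (h : ∀ c ψ, f (pureTensor c ψ) = g (pureTensor c ψ)) : f = g := by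
  ext x
  rw [← sum_pureTensor_single x, map_sum, map_sum]
  exact Finset.sum_congr rfl fun j _ => h _ _

lemma ext_pureTensor_basis {ι M : Type*} [AddCommGroup M] [Module ℂ M]
    (b : Module.Basis ι ℂ (EuclideanSpace ℂ (Fin n))) {f g : TensorSp n H →ₗ[ℂ] M}
    (h : ∀ i ψ, f (pureTensor (b i) ψ) = g (pureTensor (b i) ψ)) : f = g := by
  have hbilin : pureTensorBilin.compr₂ f = (pureTensorBilin (H := H)).compr₂ g :=
    b.ext fun i => LinearMap.ext (h i)
  exact ext_pureTensor fun c ψ => LinearMap.congr_fun₂ hbilin c ψ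

lemma tensorOp_pureTensor (A : EuclideanSpace ℂ (Fin n) →ₗ[ℂ] EuclideanSpace ℂ (Fin n))
    (B : H →ₗ[ℂ] H) (c : EuclideanSpace ℂ (Fin n)) (ψ : H) :
    tensorOp A B (pureTensor c ψ) = pureTensor (A c) (B ψ) := by
  have hAc : A c = ∑ b, c b • A (EuclideanSpace.single b 1) := by
    conv_lhs => rw [← (EuclideanSpace.basisFun (Fin n) ℂ).sum_repr c]
    simp [map_sum]
  ext i
  simp [tensorOp, pureTensor, hAc, Finset.sum_smul, smul_smul, mul_comm]

lemma tensorLeft_pureTensor (A : EuclideanSpace ℂ (Fin n) →ₗ[ℂ] EuclideanSpace ℂ (Fin n))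
    (c : EuclideanSpace ℂ (Fin n)) (ψ : H) :
    tensorLeft A (pureTensor c ψ) = pureTensor (A c) ψ :=
  tensorOp_pureTensor A LinearMap.id c ψ

lemma blockDiag_pureTensor_single (Us : Fin n → (H →ₗ[ℂ] H)) (i : Fin n) (a : ℂ) (ψ : H) :
    blockDiag Us (pureTensor (EuclideanSpace.single i a) ψ)
      = pureTensor (EuclideanSpace.single i a) (Us i ψ) := by
  ext j
  by_cases hj : j = i
  · subst hj; simp [blockDiag, pureTensor]
  · simp [blockDiag, pureTensor, hj]

theorem guardedComp_coin_rotation_general {n : ℕ} {H : Type*} [NormedAddCommGroup H]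
    [InnerProductSpace ℂ H]
    (U : EuclideanSpace ℂ (Fin n) ≃ₗᵢ[ℂ] EuclideanSpace ℂ (Fin n))
    (Us : Fin n → (H →ₗ[ℂ] H))
    (Q' : TensorSp n H →ₗ[ℂ] TensorSp n H)
    (hQ' : ∀ (i : Fin n) (ψ : H),
      Q' (pureTensor (U.symm (EuclideanSpace.single i 1)) ψ)
        = pureTensor (U.symm (EuclideanSpace.single i 1)) (Us i ψ)) :
    tensorLeft U.toLinearEquiv.toLinearMap ∘ₗ Q'
      = blockDiag Us ∘ₗ tensorLeft U.toLinearEquiv.toLinearMap := by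
  refine ext_pureTensor_basis ((EuclideanSpace.basisFun (Fin n) ℂ).map U.symm).toBasis
    fun i ψ => ?_
  simp only [OrthonormalBasis.coe_toBasis, OrthonormalBasis.map_apply,
    EuclideanSpace.basisFun_apply, LinearMap.comp_apply, hQ', tensorLeft_pureTensor,
    LinearEquiv.coe_coe, LinearIsometryEquiv.coe_toLinearEquiv,
    LinearIsometryEquiv.apply_symm_apply, blockDiag_pureTensor_single]

/-- coin-rotation law — if `Q'` is the guarded composition of the `Uᵢ`
along the rotated basis `{U†|i⟩}` (characterized by its action on pure tensors) and
`Q` the one along `{|i⟩}`, then `(U ⊗ I)·Q' = Q·(U ⊗ I)`. -/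
theorem guardedComp_coin_rotation {n : ℕ} {H : Type*} [NormedAddCommGroup H]
    [InnerProductSpace ℂ H] [FiniteDimensional ℂ H]
    (U : EuclideanSpace ℂ (Fin n) ≃ₗᵢ[ℂ] EuclideanSpace ℂ (Fin n))
    (Us : Fin n → (H →ₗ[ℂ] H)) (hUs : ∀ i, IsUnitaryOp (Us i))
    (Q' : TensorSp n H →ₗ[ℂ] TensorSp n H)
    (hQ' : ∀ (i : Fin n) (ψ : H),
      Q' (pureTensor (U.symm (EuclideanSpace.single i 1)) ψ)
        = pureTensor (U.symm (EuclideanSpace.single i 1)) (Us i ψ)) :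
    tensorLeft U.toLinearEquiv.toLinearMap ∘ₗ Q'
      = blockDiag Us ∘ₗ tensorLeft U.toLinearEquiv.toLinearMap :=
  guardedComp_coin_rotation_general U Us Q' hQ'
end
end
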